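/- arXiv:2402.06291 — 4 statements merged into one kernel-verified Lean document; each statement's English description precedes it below -/
import Mathlib

section
/- If V : ℝ≥0 → ℝ is a nonnegative continuously differentiable function along a trajectory satisfying V'(t) ≤ -α V(t)^k for constants α > 0 and 0 < k < 1, then V(t) = 0 for all t ≥ t₀ + V(t₀)^(1-k)/(α(1-k)). -/
/-!
Where `V > 0`, the chain rule turns `V' ≤ -α V ^ k` into `(V ^ (1 - k))' ≤ -α (1 - k)`, so
`V ^ (1 - k)` falls at least linearly and `V` must vanish by the time
`t₀ + V t₀ ^ (1 - k) / (α (1 - k))`. Once `V` is zero it stays zero: after a last zero `s` the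
function would be positive, hence nonincreasing, so bounded by `V s = 0`.
-/

open Set

theorem eq_zero_of_deriv_nonpos_of_pos {f : ℝ → ℝ} {a b : ℝ} (hab : a ≤ b)
    (hf : ContinuousOn f (Icc a b)) (hf' : DifferentiableOn ℝ f (Ioo a b))
    (hnn : ∀ x ∈ Icc a b, 0 ≤ f x) (hderiv : ∀ x ∈ Ioo a b, 0 < f x → deriv f x ≤ 0)
    (ha : f a = 0) : f b = 0 := by
  by_contra hb
  have hzeros : IsCompact (Icc a b ∩ f ⁻¹' {0}) :=
    isCompact_Icc.of_isClosed_subset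
      (hf.preimage_isClosed_of_isClosed isClosed_Icc isClosed_singleton) inter_subset_left
  obtain ⟨s, ⟨hs, hfs⟩, hlast⟩ := hzeros.exists_isGreatest ⟨a, left_mem_Icc.2 hab, ha⟩
  have hpos : ∀ x ∈ Ioc s b, 0 < f x := fun x hx =>
    (hnn x ⟨hs.1.trans hx.1.le, hx.2⟩).lt_of_ne' fun hx0 =>
      (hlast ⟨⟨hs.1.trans hx.1.le, hx.2⟩, hx0⟩).not_gt hx.1
  have hanti : AntitoneOn f (Icc s b) := by
    refine antitoneOn_of_deriv_nonpos (convex_Icc s b) (hf.mono (Icc_subset_Icc_left hs.1)) ?_ ?_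
    · rw [interior_Icc]
      exact hf'.mono (Ioo_subset_Ioo_left hs.1)
    · rw [interior_Icc]
      exact fun x hx => hderiv x ⟨hs.1.trans_lt hx.1, hx.2⟩ (hpos x (Ioo_subset_Ioc_self hx))
  exact hb <| le_antisymm ((hanti ⟨le_rfl, hs.2⟩ ⟨hs.2, le_rfl⟩ hs.2).trans_eq hfs)
    (hnn b (right_mem_Icc.2 hab))

theorem antitoneOn_rpow_one_sub_add_mul {V : ℝ → ℝ} {α k a b : ℝ} (hk1 : k < 1)
    (hV : ContinuousOn V (Icc a b)) (hV' : DifferentiableOn ℝ V (Ioo a b))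
    (hpos : ∀ x ∈ Ioo a b, 0 < V x) (hineq : ∀ x ∈ Ioo a b, deriv V x ≤ -α * V x ^ k) :
    AntitoneOn (fun x => V x ^ (1 - k) + α * (1 - k) * x) (Icc a b) := by
  have h1k : 0 ≤ 1 - k := by linarith
  refine antitoneOn_of_hasDerivWithinAt_nonpos (convex_Icc a b)
    ((hV.rpow_const fun _ _ => Or.inr h1k).add (continuousOn_const.mul continuousOn_id))
    (f' := fun x => deriv V x * (1 - k) * V x ^ (1 - k - 1) + α * (1 - k)) ?_ ?_
  all_goals rw [interior_Icc]
  · intro x hx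
    have hVx : HasDerivAt V (deriv V x) x :=
      (hV'.differentiableAt (isOpen_Ioo.mem_nhds hx)).hasDerivAt
    exact ((hVx.rpow_const (Or.inl (hpos x hx).ne')).add
      ((hasDerivAt_id x).const_mul (α * (1 - k)) |>.congr_deriv (mul_one _))).hasDerivWithinAt
  · intro x hx
    have hVk : V x ^ k * V x ^ (1 - k - 1) = 1 := by
      rw [← Real.rpow_add (hpos x hx)]
      norm_num
    have hVx := hpos x hx
    calc deriv V x * (1 - k) * V x ^ (1 - k - 1) + α * (1 - k)
        ≤ -α * V x ^ k * (1 - k) * V x ^ (1 - k - 1) + α * (1 - k) := by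
          gcongr
          exact hineq x hx
      _ = 0 := by linear_combination (-α * (1 - k)) * hVk

theorem exists_eq_zero_of_deriv_le_neg_mul_rpow {V : ℝ → ℝ} {α k a : ℝ} (hα : 0 < α)
    (hk1 : k < 1) (ha : 0 ≤ V a)
    (hV : ContinuousOn V (Icc a (a + V a ^ (1 - k) / (α * (1 - k)))))
    (hV' : DifferentiableOn ℝ V (Ioo a (a + V a ^ (1 - k) / (α * (1 - k)))))
    (hnn : ∀ x ∈ Icc a (a + V a ^ (1 - k) / (α * (1 - k))), 0 ≤ V x)
    (hineq : ∀ x ∈ Ioo a (a + V a ^ (1 - k) / (α * (1 - k))), 0 < V x →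
      deriv V x ≤ -α * V x ^ k) :
    ∃ s ∈ Icc a (a + V a ^ (1 - k) / (α * (1 - k))), V s = 0 := by
  set T := a + V a ^ (1 - k) / (α * (1 - k))
  have hc : 0 < α * (1 - k) := mul_pos hα (by linarith)
  have hT : a ≤ T := le_add_of_nonneg_right (div_nonneg (Real.rpow_nonneg ha _) hc.le)
  by_contra! hne
  have hpos (x) (hx : x ∈ Icc a T) : 0 < V x := (hnn x hx).lt_of_ne' (hne x hx)
  have hdecay := antitoneOn_rpow_one_sub_add_mul hk1 hV hV'
    (fun x hx => hpos x (Ioo_subset_Icc_self hx))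
    (fun x hx => hineq x hx (hpos x (Ioo_subset_Icc_self hx)))
    (left_mem_Icc.2 hT) (right_mem_Icc.2 hT) hT
  have hT_eq : α * (1 - k) * T = α * (1 - k) * a + V a ^ (1 - k) := by
    rw [mul_add, mul_div_cancel₀ _ hc.ne']
  have := Real.rpow_pos_of_pos (hpos T (right_mem_Icc.2 hT)) (1 - k)
  simp only at hdecay
  linarith

theorem finite_time_stability_general
    (V : ℝ → ℝ) (t₀ α k : ℝ) (hα : 0 < α) (hk1 : k < 1)
    (hVnn : ∀ t, t₀ ≤ t → 0 ≤ V t)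
    (hC1 : ∀ t, t₀ ≤ t → DifferentiableAt ℝ V t)
    (hineq : ∀ t, t₀ ≤ t → 0 < V t → deriv V t ≤ -α * V t ^ k) :
    ∀ t, t₀ + V t₀ ^ (1 - k) / (α * (1 - k)) ≤ t → V t = 0 := by
  intro t ht
  have hdiff {a : ℝ} (ha : t₀ ≤ a) (b : ℝ) : DifferentiableOn ℝ V (Icc a b) := fun x hx =>
    (hC1 x (ha.trans hx.1)).differentiableWithinAt
  obtain ⟨s, hs, hVs⟩ := exists_eq_zero_of_deriv_le_neg_mul_rpow hα hk1
    (hVnn t₀ le_rfl) (hdiff le_rfl _).continuousOn ((hdiff le_rfl _).mono Ioo_subset_Icc_self)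
    (fun x hx => hVnn x hx.1) (fun x hx => hineq x hx.1.le)
  refine eq_zero_of_deriv_nonpos_of_pos (hs.2.trans ht) (hdiff hs.1 t).continuousOn
    ((hdiff hs.1 t).mono Ioo_subset_Icc_self) (fun x hx => hVnn x (hs.1.trans hx.1))
    (fun x hx hVx => (hineq x (hs.1.trans hx.1.le) hVx).trans ?_) hVs
  rw [neg_mul, neg_nonpos]
  positivity

/-- Finite-time stability via Lyapunov differential inequality (Bhat–Bernstein,
Theorem 4.2, scalar comparison version). -/
theorem finite_time_stability
    (V : ℝ → ℝ) (t₀ α k : ℝ) (hα : 0 < α) (hk0 : 0 < k) (hk1 : k < 1)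
    (hVnn : ∀ t, t₀ ≤ t → 0 ≤ V t)
    (hC1 : ∀ t, t₀ ≤ t → DifferentiableAt ℝ V t)
    (hineq : ∀ t, t₀ ≤ t → 0 < V t → deriv V t ≤ -α * V t ^ k) :
    ∀ t, t₀ + V t₀ ^ (1 - k) / (α * (1 - k)) ≤ t → V t = 0 :=
  finite_time_stability_general V t₀ α k hα hk1 hVnn hC1 hineq
end

section
/- If a nonnegative C¹ function V : [t₀, t_p) → ℝ satisfies V'(t) ≤ -η(e^{V(t)} - 1)/(e^{V(t)}(t_p - t)) for all t ∈ [t₀, t_p), with η > 1, then V(t) → 0 as t → t_p⁻. -/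
/-!
With `U = e^V - 1 ≥ 0` the hypothesis reads `U' ≤ -η U / (t_p - t)`, so `U (t_p - t)^(-η)` is
nonincreasing and `0 ≤ V ≤ U ≤ U(t₀) (t_p - t₀)^(-η) (t_p - t)^η → 0`.
-/

open Set Filter Topology

theorem antitoneOn_mul_sub_rpow_neg {U : ℝ → ℝ} {a b η : ℝ}
    (hU : ∀ t ∈ Ico a b, DifferentiableAt ℝ U t)
    (hU' : ∀ t ∈ Ico a b, deriv U t ≤ -η * U t / (b - t)) :
    AntitoneOn (fun t => U t * (b - t) ^ (-η)) (Ico a b) := by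
  have hweight : ∀ t ∈ Ico a b,
      HasDerivAt (fun s => (b - s) ^ (-η)) (-1 * -η * (b - t) ^ (-η - 1)) t := fun t ht =>
    ((hasDerivAt_id t).const_sub b).rpow_const (Or.inl (sub_pos.2 ht.2).ne')
  refine antitoneOn_of_hasDerivWithinAt_nonpos (convex_Ico a b)
    (f' := fun t => deriv U t * (b - t) ^ (-η) + U t * (-1 * -η * (b - t) ^ (-η - 1)))
    ?_ (fun t ht => ?_) (fun t ht => ?_)
  · exact fun t ht => ((hU t ht).hasDerivAt.mul (hweight t ht)).continuousAt.continuousWithinAt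
  · rw [interior_Ico] at ht
    exact ((hU t (Ioo_subset_Ico_self ht)).hasDerivAt.mul
      (hweight t (Ioo_subset_Ico_self ht))).hasDerivWithinAt
  · rw [interior_Ico] at ht
    have hbt : 0 < b - t := sub_pos.2 ht.2
    have hbound := mul_le_mul_of_nonneg_right (hU' t (Ioo_subset_Ico_self ht))
      (Real.rpow_pos_of_pos hbt (-η)).le
    rw [Real.rpow_sub_one hbt.ne']
    calc _ ≤ -η * U t / (b - t) * (b - t) ^ (-η) + U t * (-1 * -η * ((b - t) ^ (-η) / (b - t))) :=
          add_le_add_left hbound _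
      _ = 0 := by ring

theorem tendsto_zero_of_antitoneOn_mul_sub_rpow_neg {U : ℝ → ℝ} {a b η : ℝ} (hab : a < b)
    (hη : 0 < η) (hU : ∀ t ∈ Ico a b, 0 ≤ U t)
    (hanti : AntitoneOn (fun t => U t * (b - t) ^ (-η)) (Ico a b)) :
    Tendsto U (𝓝[Ico a b] b) (𝓝 0) := by
  have ha : a ∈ Ico a b := left_mem_Ico.2 hab
  have hbound : ∀ t ∈ Ico a b, U t ≤ U a * (b - a) ^ (-η) * (b - t) ^ η := fun t ht => by
    have hbt : 0 < b - t := sub_pos.2 ht.2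
    calc U t = U t * (b - t) ^ (-η) * (b - t) ^ η := by
          rw [mul_assoc, ← Real.rpow_add hbt, neg_add_cancel, Real.rpow_zero, mul_one]
      _ ≤ U a * (b - a) ^ (-η) * (b - t) ^ η :=
          mul_le_mul_of_nonneg_right (hanti ha ht ht.1) (Real.rpow_nonneg hbt.le η)
  have hdecay : Tendsto (fun t => (b - t) ^ η) (𝓝[Ico a b] b) (𝓝 0) := by
    have hcont : Continuous fun t : ℝ => (b - t) ^ η :=
      (continuous_const.sub continuous_id).rpow_const fun _ => Or.inr hη.le
    simpa [Real.zero_rpow hη.ne'] using (hcont.tendsto b).mono_left nhdsWithin_le_nhds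
  refine tendsto_of_tendsto_of_tendsto_of_le_of_le' tendsto_const_nhds
    (by simpa using hdecay.const_mul (U a * (b - a) ^ (-η))) ?_ ?_
  · filter_upwards [self_mem_nhdsWithin] with t ht using hU t ht
  · filter_upwards [self_mem_nhdsWithin] with t ht using hbound t ht

theorem deriv_exp_sub_one_le {V : ℝ → ℝ} {t c η : ℝ} (hV : DifferentiableAt ℝ V t)
    (hineq : deriv V t ≤ -η * (Real.exp (V t) - 1) / (Real.exp (V t) * c)) :
    deriv (fun s => Real.exp (V s) - 1) t ≤ -η * (Real.exp (V t) - 1) / c := by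
  have hexp : 0 < Real.exp (V t) := Real.exp_pos _
  rw [(hV.hasDerivAt.exp.sub_const 1).deriv]
  calc Real.exp (V t) * deriv V t
      ≤ Real.exp (V t) * (-η * (Real.exp (V t) - 1) / (Real.exp (V t) * c)) := by gcongr
    _ = -η * (Real.exp (V t) - 1) / c := by rw [mul_comm (Real.exp _) c, ← div_div,
          mul_div_cancel₀ _ hexp.ne']

/-- Predefined-time stability Lyapunov lemma: a nonnegative C¹ function satisfying
`V' ≤ -η (e^V - 1)/(e^V (t_p - t))` on `[t₀, t_p)` with `η > 1` tends to `0` as `t → t_p⁻`. -/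
theorem predefined_time_lyapunov
    (V : ℝ → ℝ) (t₀ tp η : ℝ) (ht : t₀ < tp) (hη : 1 < η)
    (hVnn : ∀ t ∈ Set.Ico t₀ tp, 0 ≤ V t)
    (hC1 : ∀ t ∈ Set.Ico t₀ tp, DifferentiableAt ℝ V t)
    (hineq : ∀ t ∈ Set.Ico t₀ tp,
      deriv V t ≤ -η * (Real.exp (V t) - 1) / (Real.exp (V t) * (tp - t))) :
    Filter.Tendsto V (nhdsWithin tp (Set.Ico t₀ tp)) (nhds 0) := by
  set U : ℝ → ℝ := fun t => Real.exp (V t) - 1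
  have hU : ∀ t ∈ Ico t₀ tp, DifferentiableAt ℝ U t := fun t h =>
    (hC1 t h).exp.sub_const 1
  have hUnn : ∀ t ∈ Ico t₀ tp, 0 ≤ U t := fun t h =>
    sub_nonneg.2 (Real.one_le_exp (hVnn t h))
  have hUlim : Tendsto U (𝓝[Ico t₀ tp] tp) (𝓝 0) :=
    tendsto_zero_of_antitoneOn_mul_sub_rpow_neg ht (by linarith) hUnn
      (antitoneOn_mul_sub_rpow_neg hU fun t h => deriv_exp_sub_one_le (hC1 t h) (hineq t h))
  refine tendsto_of_tendsto_of_tendsto_of_le_of_le' tendsto_const_nhds hUlim ?_ ?_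
  · filter_upwards [self_mem_nhdsWithin] with t h using hVnn t h
  · filter_upwards [self_mem_nhdsWithin] with t _ using by linarith [Real.add_one_le_exp (V t)]
end

section
/- For the heading error dynamics e'(t) = -η(e^{e(t)} - 1)/(e^{e(t)}(t_p - t)) with η > 1, the Lyapunov function V(e) = e²/2 satisfies V'(t) = e·e' ≤ -η|e|(e^{|e|} - 1)/(e^{|e|}(t_p - t)) ≤ 0 for all t ∈ [t₀, t_p). -/
/-!
Along the dynamics, `V' = e e' = -(η / (t_p - t)) φ(e)` with `φ(z) = z (1 - exp (-z))`.
The function `φ` is nonnegative, and `φ(z) ≥ φ(|z|)`: for `z < 0` the difference is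
`2 (-z) (cosh z - 1) ≥ 0`.
-/

open Real

lemma mul_exp_sub_one_div_exp (x : ℝ) : x * (exp x - 1) / exp x = x * (1 - exp (-x)) := by
  rw [exp_neg]
  field_simp

lemma mul_one_sub_exp_neg_nonneg (x : ℝ) : 0 ≤ x * (1 - exp (-x)) := by
  rcases le_total 0 x with hx | hx
  · exact mul_nonneg hx (sub_nonneg.mpr (exp_le_one_iff.mpr (neg_nonpos.mpr hx)))
  · exact mul_nonneg_of_nonpos_of_nonpos hx (sub_nonpos.mpr (one_le_exp (neg_nonneg.mpr hx)))

lemma abs_mul_one_sub_exp_neg_abs_le (z : ℝ) :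
    |z| * (1 - exp (-|z|)) ≤ z * (1 - exp (-z)) := by
  rcases le_total 0 z with hz | hz
  · rw [abs_of_nonneg hz]
  · have hcosh : 1 ≤ (exp z + exp (-z)) / 2 := cosh_eq z ▸ one_le_cosh z
    rw [abs_of_nonpos hz, neg_neg]
    nlinarith

lemma HasDerivAt.sq_div_two {f : ℝ → ℝ} {f' x : ℝ} (hf : HasDerivAt f f' x) :
    HasDerivAt (fun s => f s ^ 2 / 2) (f x * f') x :=
  ((hf.fun_pow 2).div_const 2).congr_deriv (by ring)

/-- For the heading error dynamics `e' = -η(e^e - 1)/(e^e (t_p - t))` with `η > 1`, the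
Lyapunov function `V = e²/2` satisfies
`V' = e·e' ≤ -η|e|(e^{|e|} - 1)/(e^{|e|}(t_p - t)) ≤ 0` on `[t₀, t_p)`. -/
theorem heading_error_lyapunov_decrease
    (e : ℝ → ℝ) (t₀ tp η : ℝ) (hη : 1 < η)
    (hode : ∀ t ∈ Set.Ico t₀ tp,
      HasDerivAt e (-η * (Real.exp (e t) - 1) / (Real.exp (e t) * (tp - t))) t) :
    ∀ t ∈ Set.Ico t₀ tp,
      deriv (fun s => e s ^ 2 / 2) t = e t * deriv e t ∧
      deriv (fun s => e s ^ 2 / 2) t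
        ≤ -η * |e t| * (Real.exp |e t| - 1) / (Real.exp |e t| * (tp - t)) ∧
      -η * |e t| * (Real.exp |e t| - 1) / (Real.exp |e t| * (tp - t)) ≤ 0 := by
  intro t ht
  have hgain : 0 ≤ η / (tp - t) := div_nonneg (by linarith) (by linarith [ht.2])
  have hrate : ∀ x : ℝ, -η * x * (exp x - 1) / (exp x * (tp - t))
      = -(η / (tp - t)) * (x * (1 - exp (-x))) := fun x => by
    rw [← mul_exp_sub_one_div_exp, mul_comm (exp x), ← div_div]
    ring
  have hV : deriv (fun s => e s ^ 2 / 2) t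
      = -η * e t * (exp (e t) - 1) / (exp (e t) * (tp - t)) := by
    rw [(hode t ht).sq_div_two.deriv]
    ring
  refine ⟨by rw [hV, (hode t ht).deriv]; ring, ?_, ?_⟩
  · rw [hV, hrate, hrate]
    exact mul_le_mul_of_nonpos_left (abs_mul_one_sub_exp_neg_abs_le _) (neg_nonpos.mpr hgain)
  · rw [hrate]
    exact mul_nonpos_of_nonpos_of_nonneg (neg_nonpos.mpr hgain) (mul_one_sub_exp_neg_nonneg _)
end

section
/- Let p(t) = (x(t), y(t)) satisfy x' = v·cos(ψ_dg), y' = v·sin(ψ_dg) where ψ_dg = atan2(y_w - y, x_w - x), v > 0, and p(t) ≠ p_w. Then the squared distance V_w(t) = ‖p(t) - p_w‖²/2 satisfies V_w'(t) = -v·‖p(t) - p_w‖ = -√2·v·V_w(t)^{1/2}. -/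
/-! Moving straight at the waypoint with speed `v`, the velocity is `-v` times the unit vector
along `p - p_w`, so `V_w' = ⟪p - p_w, p'⟫ = -v‖p - p_w‖`. In coordinates this is the identity
`a cos (arg z) + b sin (arg z) = |z|` for `z = a + b i`, true for every `z` because
`a = |z| cos (arg z)` and `b = |z| sin (arg z)`. -/

/-- Two-argument arctangent `atan2 y x`, realized as the argument of `x + y i`. -/
noncomputable def atan2 (y x : ℝ) : ℝ := Complex.arg ⟨x, y⟩

theorem Complex.re_mul_cos_arg_add_im_mul_sin_arg (z : ℂ) :
    z.re * Real.cos z.arg + z.im * Real.sin z.arg = ‖z‖ := by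
  rw [← Complex.norm_mul_cos_arg z, ← Complex.norm_mul_sin_arg z]
  linear_combination ‖z‖ * Real.sin_sq_add_cos_sq z.arg

theorem mul_cos_atan2_add_mul_sin_atan2 (a b : ℝ) :
    a * Real.cos (atan2 b a) + b * Real.sin (atan2 b a) = Real.sqrt (a ^ 2 + b ^ 2) :=
  (Complex.re_mul_cos_arg_add_im_mul_sin_arg ⟨a, b⟩).trans (Complex.norm_eq_sqrt_sq_add_sq _)

theorem HasDerivAt.half_sq_dist {x y : ℝ → ℝ} {x' y' t : ℝ} (hx : HasDerivAt x x' t)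
    (hy : HasDerivAt y y' t) (xw yw : ℝ) :
    HasDerivAt (fun s => ((x s - xw) ^ 2 + (y s - yw) ^ 2) / 2)
      ((x t - xw) * x' + (y t - yw) * y') t :=
  (((hx.sub_const xw).fun_pow 2).fun_add ((hy.sub_const yw).fun_pow 2)).div_const 2
    |>.congr_deriv (by push_cast; ring)

theorem Real.sqrt_eq_sqrt_two_mul_rpow_half (S : ℝ) :
    Real.sqrt S = Real.sqrt 2 * (S / 2) ^ ((1 : ℝ) / 2) := by
  rw [← Real.sqrt_eq_rpow, ← Real.sqrt_mul zero_le_two, mul_div_cancel₀ S two_ne_zero]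

theorem los_squared_distance_derivative_general
    (x y : ℝ → ℝ) (xw yw v : ℝ)
    (hx : ∀ t, HasDerivAt x (v * Real.cos (atan2 (yw - y t) (xw - x t))) t)
    (hy : ∀ t, HasDerivAt y (v * Real.sin (atan2 (yw - y t) (xw - x t))) t) :
    ∀ t,
      HasDerivAt (fun s => ((x s - xw) ^ 2 + (y s - yw) ^ 2) / 2)
        (-v * Real.sqrt ((x t - xw) ^ 2 + (y t - yw) ^ 2)) t ∧
      -v * Real.sqrt ((x t - xw) ^ 2 + (y t - yw) ^ 2)
        = -(Real.sqrt 2) * v * (((x t - xw) ^ 2 + (y t - yw) ^ 2) / 2) ^ ((1 : ℝ) / 2) := by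
  intro t
  have hlos := mul_cos_atan2_add_mul_sin_atan2 (xw - x t) (yw - y t)
  have hdist : (xw - x t) ^ 2 + (yw - y t) ^ 2 = (x t - xw) ^ 2 + (y t - yw) ^ 2 := by ring
  rw [hdist] at hlos
  refine ⟨?_, ?_⟩
  · convert (hx t).half_sq_dist (hy t) xw yw using 1
    rw [← hlos]
    ring
  · rw [Real.sqrt_eq_sqrt_two_mul_rpow_half]
    ring

/-- Line-of-sight guidance: moving at speed `v` along the heading
`ψ_dg = atan2 (y_w - y, x_w - x)`, the half squared distance `V_w = ‖p - p_w‖²/2` satisfies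
`V_w' = -v‖p - p_w‖ = -√2·v·V_w^{1/2}`. -/
theorem los_squared_distance_derivative
    (x y : ℝ → ℝ) (xw yw v : ℝ) (hv : 0 < v)
    (hx : ∀ t, HasDerivAt x (v * Real.cos (atan2 (yw - y t) (xw - x t))) t)
    (hy : ∀ t, HasDerivAt y (v * Real.sin (atan2 (yw - y t) (xw - x t))) t)
    (hne : ∀ t, (x t, y t) ≠ (xw, yw)) :
    ∀ t,
      HasDerivAt (fun s => ((x s - xw) ^ 2 + (y s - yw) ^ 2) / 2)
        (-v * Real.sqrt ((x t - xw) ^ 2 + (y t - yw) ^ 2)) t ∧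
      -v * Real.sqrt ((x t - xw) ^ 2 + (y t - yw) ^ 2)
        = -(Real.sqrt 2) * v * (((x t - xw) ^ 2 + (y t - yw) ^ 2) / 2) ^ ((1 : ℝ) / 2) :=
  los_squared_distance_derivative_general x y xw yw v hx hy
end
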